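/- arXiv:0712.1611 — 4 statements merged into one kernel-verified Lean document; each statement's English description precedes it below -/
import Mathlib

section
/- Let p be an odd prime, let A ⊆ 𝔽_p, and associate to each a ∈ A a real number w_a ∈ [0,1]. Let γ ∈ (0,1] satisfy γ·p > Σ_{a ∈ A} w_a. Suppose h : 𝔽_p → [0,1] satisfies h(a) = w_a for all a ∈ A, 𝔼(h) = γ, and Λ(h) ≤ Λ(h') for every h' : 𝔽_p → [0,1] with h'(a) = w_a for all a ∈ A and 𝔼(h') = γ (i.e. h minimizes Λ subject to these constraints). Then there exists L > 0 such that for every n ∈ 𝔽_p \ A: if F_h(n) < L then h(n) = 1, and if F_h(n) > L then h(n) = 0. Here F_h(n) := (h∗h)(2n) + 2·(h∗h₂)(−n), where h₂(m) := h(−m/2) (with −m/2 computed in 𝔽_p). -/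
noncomputable def Lam (p : ℕ) [NeZero p] (f : ZMod p → ℝ) : ℝ :=
  ((p : ℝ) ^ 2)⁻¹ * ∑ n : ZMod p, ∑ d : ZMod p, f n * f (n + d) * f (n + 2 * d)

noncomputable def Ex (p : ℕ) [NeZero p] (f : ZMod p → ℝ) : ℝ :=
  (p : ℝ)⁻¹ * ∑ n : ZMod p, f n

noncomputable def conv (p : ℕ) [NeZero p] (u v : ZMod p → ℝ) (m : ZMod p) : ℝ :=
  ∑ k : ZMod p, u k * v (m - k)

/-- `F h n = (h∗h)(2n) + 2 (h∗h₂)(−n)` where `h₂(m) = h(−m/2)`. -/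
noncomputable def Fh (p : ℕ) [NeZero p] (h : ZMod p → ℝ) (n : ZMod p) : ℝ :=
  conv p h h (2 * n) + 2 * conv p h (fun m => h (-m * (2 : ZMod p)⁻¹)) (-n)

section Aux
variable (p : ℕ) [Fact p.Prime]

lemma aux_sum1 (h2 : (2 : ZMod p) ≠ 0) (h : ZMod p → ℝ) (c : ZMod p) :
    ∑ m : ZMod p, ∑ d : ZMod p, (if m = c then (1:ℝ) else 0) * h (m + d) * h (m + 2*d)
      = conv p h (fun m => h (-m * (2 : ZMod p)⁻¹)) (-c) := by
  rw [Finset.sum_eq_single c]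
  · simp only [if_pos rfl, one_mul]
    have hb : Function.Bijective (fun d : ZMod p => c + 2*d) := by
      refine Finite.injective_iff_bijective.mp ?_
      intro a b hab
      simp only at hab
      exact mul_left_cancel₀ h2 (add_left_cancel hab)
    rw [Fintype.sum_bijective _ hb _ (fun k => h k * h ((c + k) * (2:ZMod p)⁻¹))
      (by
        intro d
        have : (c + (c + 2*d)) * (2:ZMod p)⁻¹ = c + d := by
          have : (c + (c + 2*d)) = 2 * (c + d) := by ring
          rw [this, mul_comm 2 (c+d), mul_assoc, mul_inv_cancel₀ h2, mul_one]
        rw [this]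
        simp only [if_true]
        ring)]
    unfold conv
    refine Finset.sum_congr rfl fun k _ => ?_
    congr 2
    ring
  · intro b _ hb
    simp [if_neg hb]
  · simp

lemma aux_sum2 (h : ZMod p → ℝ) (c : ZMod p) :
    ∑ m : ZMod p, ∑ d : ZMod p, h m * (if m + d = c then (1:ℝ) else 0) * h (m + 2*d)
      = conv p h h (2*c) := by
  unfold conv
  refine Finset.sum_congr rfl fun m _ => ?_
  have hiff : ∀ d : ZMod p, (m + d = c) ↔ (d = c - m) := by
    intro d; constructor
    · intro H; rw [← H]; ring
    · intro H; rw [H]; ring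
  simp only [hiff, mul_ite, ite_mul, mul_one, mul_zero, zero_mul]
  rw [Finset.sum_ite_eq' Finset.univ (c - m) (fun d => h m * h (m + 2*d))]
  simp only [Finset.mem_univ, if_pos]
  congr 2
  ring

lemma aux_sum3 (h2 : (2 : ZMod p) ≠ 0) (h : ZMod p → ℝ) (c : ZMod p) :
    ∑ m : ZMod p, ∑ d : ZMod p, h m * h (m + d) * (if m + 2*d = c then (1:ℝ) else 0)
      = conv p h (fun m => h (-m * (2 : ZMod p)⁻¹)) (-c) := by
  unfold conv
  refine Finset.sum_congr rfl fun m _ => ?_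
  have hiff : ∀ d : ZMod p, (m + 2*d = c) ↔ (d = (c - m) * (2:ZMod p)⁻¹) := by
    intro d; constructor
    · intro H
      have h1 : 2 * d = c - m := by rw [← H]; ring
      rw [← h1, mul_comm 2 d, mul_assoc, mul_inv_cancel₀ h2, mul_one]
    · intro H
      rw [H]
      have : 2 * ((c - m) * (2:ZMod p)⁻¹) = c - m := by
        rw [mul_comm 2, mul_assoc, inv_mul_cancel₀ h2, mul_one]
      rw [this]; ring
  simp only [hiff, mul_ite, ite_mul, mul_one, mul_zero, zero_mul]
  rw [Finset.sum_ite_eq' Finset.univ ((c - m) * (2:ZMod p)⁻¹)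
    (fun d => h m * h (m + d))]
  simp only [Finset.mem_univ, if_pos]
  have harg : m + (c - m) * (2:ZMod p)⁻¹ = -(-c - m) * (2:ZMod p)⁻¹ := by
    have h1 : -(-c - m) = (c - m) + 2 * m := by ring
    rw [h1, add_mul, mul_comm 2 m, mul_assoc, mul_inv_cancel₀ h2, mul_one, add_comm]
  rw [harg]

end Aux

lemma aux_expand (p : ℕ) [Fact p.Prime] (f δ : ZMod p → ℝ) (t : ℝ) :
    Lam p (fun x => f x + t * δ x) =
      Lam p f
      + t * (((p : ℝ) ^ 2)⁻¹ * ∑ m : ZMod p, ∑ d : ZMod p,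
          (δ m * f (m + d) * f (m + 2*d) + f m * δ (m + d) * f (m + 2*d)
            + f m * f (m + d) * δ (m + 2*d)))
      + t^2 * (((p : ℝ) ^ 2)⁻¹ * ∑ m : ZMod p, ∑ d : ZMod p,
          (δ m * δ (m + d) * f (m + 2*d) + δ m * f (m + d) * δ (m + 2*d)
            + f m * δ (m + d) * δ (m + 2*d)))
      + t^3 * (((p : ℝ) ^ 2)⁻¹ * ∑ m : ZMod p, ∑ d : ZMod p,
          δ m * δ (m + d) * δ (m + 2*d)) := by
  unfold Lam
  have key : ∀ m d : ZMod p,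
      (f m + t * δ m) * (f (m + d) + t * δ (m + d)) * (f (m + 2*d) + t * δ (m + 2*d))
        = f m * f (m + d) * f (m + 2*d)
          + t * (δ m * f (m + d) * f (m + 2*d) + f m * δ (m + d) * f (m + 2*d)
              + f m * f (m + d) * δ (m + 2*d))
          + t^2 * (δ m * δ (m + d) * f (m + 2*d) + δ m * f (m + d) * δ (m + 2*d)
              + f m * δ (m + d) * δ (m + 2*d))
          + t^3 * (δ m * δ (m + d) * δ (m + 2*d)) := by
    intro m d; ring
  simp only [key, Finset.sum_add_distrib, ← Finset.mul_sum]
  ring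

lemma aux_S1 (p : ℕ) [Fact p.Prime] (h2 : (2 : ZMod p) ≠ 0) (h : ZMod p → ℝ) (n n' : ZMod p) :
    ∑ m : ZMod p, ∑ d : ZMod p,
      (((if m = n then (1:ℝ) else 0) - (if m = n' then 1 else 0)) * h (m + d) * h (m + 2*d)
        + h m * ((if m + d = n then (1:ℝ) else 0) - (if m + d = n' then 1 else 0)) * h (m + 2*d)
        + h m * h (m + d) * ((if m + 2*d = n then (1:ℝ) else 0) - (if m + 2*d = n' then 1 else 0)))
      = Fh p h n - Fh p h n' := by
  simp only [sub_mul, mul_sub]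
  simp only [Finset.sum_add_distrib, Finset.sum_sub_distrib]
  rw [aux_sum1 p h2 h n, aux_sum1 p h2 h n', aux_sum2 p h n, aux_sum2 p h n',
    aux_sum3 p h2 h n, aux_sum3 p h2 h n']
  unfold Fh
  ring


lemma aux_exchange (p : ℕ) [Fact p.Prime] (h2 : (2 : ZMod p) ≠ 0)
    (A : Finset (ZMod p)) (w : ZMod p → ℝ)
    (γ : ℝ)
    (h : ZMod p → ℝ) (hh : ∀ n, h n ∈ Set.Icc (0 : ℝ) 1)
    (hA : ∀ a ∈ A, h a = w a) (hE : Ex p h = γ)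
    (hmin : ∀ h' : ZMod p → ℝ, (∀ n, h' n ∈ Set.Icc (0 : ℝ) 1) →
      (∀ a ∈ A, h' a = w a) → Ex p h' = γ → Lam p h ≤ Lam p h')
    (n m : ZMod p) (hnA : n ∉ A) (hmA : m ∉ A) (hnm : n ≠ m)
    (hn1 : h n < 1) (hm0 : 0 < h m) :
    Fh p h m ≤ Fh p h n := by
  by_contra hc
  push_neg at hc
  set δ : ZMod p → ℝ := fun x => (if x = n then (1:ℝ) else 0) - (if x = m then 1 else 0) with hδ
  set S2 : ℝ := ((p : ℝ) ^ 2)⁻¹ * ∑ a : ZMod p, ∑ d : ZMod p,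
      (δ a * δ (a + d) * h (a + 2*d) + δ a * h (a + d) * δ (a + 2*d)
        + h a * δ (a + d) * δ (a + 2*d)) with hS2
  set S3 : ℝ := ((p : ℝ) ^ 2)⁻¹ * ∑ a : ZMod p, ∑ d : ZMod p,
      δ a * δ (a + d) * δ (a + 2*d) with hS3
  have hp0 : (0:ℝ) < ((p : ℝ) ^ 2)⁻¹ := by
    have : (0:ℝ) < (p:ℝ) := by
      exact_mod_cast Nat.pos_of_ne_zero (Fact.out : p.Prime).ne_zero
    positivity
  set ε : ℝ := ((p : ℝ) ^ 2)⁻¹ * (Fh p h m - Fh p h n) with hε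
  have hε0 : 0 < ε := by
    apply mul_pos hp0; linarith
  set B : ℝ := |S2| + |S3| + 1 with hB
  have hB0 : 0 < B := by positivity
  set t : ℝ := min (min (1 - h n) (h m)) (min 1 (ε / B)) with ht
  have ht0 : 0 < t := by
    apply lt_min (lt_min (by linarith) hm0) (lt_min one_pos (div_pos hε0 hB0))
  have ht1 : t ≤ 1 := le_trans (min_le_right _ _) (min_le_left _ _)
  have htn : t ≤ 1 - h n := le_trans (min_le_left _ _) (min_le_left _ _)
  have htm : t ≤ h m := le_trans (min_le_left _ _) (min_le_right _ _)
  have htε : t * B ≤ ε := by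
    have : t ≤ ε / B := le_trans (min_le_right _ _) (min_le_right _ _)
    calc t * B ≤ (ε / B) * B := by nlinarith
    _ = ε := by field_simp
  -- the perturbed function
  have hδn : δ n = 1 := by simp [hδ, hnm]
  have hδm : δ m = -1 := by simp [hδ, Ne.symm hnm]
  have hδo : ∀ x, x ≠ n → x ≠ m → δ x = 0 := by
    intro x hxn hxm; simp [hδ, hxn, hxm]
  have hmem : ∀ x, h x + t * δ x ∈ Set.Icc (0:ℝ) 1 := by
    intro x
    by_cases hx : x = n
    · rw [hx, hδn]
      refine ⟨?_, ?_⟩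
      · have := (hh n).1; linarith
      · linarith
    by_cases hx2 : x = m
    · rw [hx2, hδm]
      refine ⟨?_, ?_⟩
      · linarith
      · have := (hh m).2; linarith
    · rw [hδo x hx hx2]; simpa using hh x
  have hAmem : ∀ a ∈ A, h a + t * δ a = w a := by
    intro a ha
    rw [hδo a (fun e => hnA (e ▸ ha)) (fun e => hmA (e ▸ ha)), mul_zero, add_zero]
    exact hA a ha
  have hExmem : Ex p (fun x => h x + t * δ x) = γ := by
    unfold Ex
    rw [Finset.sum_add_distrib, ← Finset.mul_sum]
    have : ∑ x : ZMod p, δ x = 0 := by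
      simp only [hδ, Finset.sum_sub_distrib]
      rw [Finset.sum_ite_eq' Finset.univ n (fun _ => (1:ℝ)),
        Finset.sum_ite_eq' Finset.univ m (fun _ => (1:ℝ))]
      simp
    rw [this, mul_zero, add_zero, ← Ex, hE]
  have hle := hmin _ hmem hAmem hExmem
  rw [aux_expand p h δ t] at hle
  have hS1 : ((p : ℝ) ^ 2)⁻¹ * ∑ a : ZMod p, ∑ d : ZMod p,
      (δ a * h (a + d) * h (a + 2*d) + h a * δ (a + d) * h (a + 2*d)
        + h a * h (a + d) * δ (a + 2*d)) = -ε := by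
    rw [hδ]
    rw [aux_S1 p h2 h n m]
    rw [hε]; ring
  rw [hS1, ← hS2, ← hS3] at hle
  -- now: Lam p h ≤ Lam p h + t * (-ε) + t^2 * S2 + t^3 * S3
  have key : 0 ≤ t * (-ε) + t^2 * S2 + t^3 * S3 := by linarith
  have b2 : t^2 * S2 ≤ t^2 * |S2| :=
    mul_le_mul_of_nonneg_left (le_abs_self S2) (by positivity)
  have h32 : t^3 ≤ t^2 := by nlinarith
  have b3 : t^3 * S3 ≤ t^2 * |S3| :=
    le_trans (mul_le_mul_of_nonneg_left (le_abs_self S3) (by positivity))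
      (mul_le_mul_of_nonneg_right h32 (abs_nonneg S3))
  have b4 : t^2 * (|S2| + |S3|) = t^2 * B - t^2 := by rw [hB]; ring
  have b5 : t^2 * B ≤ t * ε := by
    have := mul_le_mul_of_nonneg_left htε (le_of_lt ht0)
    calc t^2 * B = t * (t * B) := by ring
    _ ≤ t * ε := this
  have ht2 : 0 < t^2 := by positivity
  have : t^2 * S2 + t^3 * S3 ≤ t^2 * B - t^2 := by
    calc t^2 * S2 + t^3 * S3 ≤ t^2 * |S2| + t^2 * |S3| := by linarith
    _ = t^2 * (|S2| + |S3|) := by ring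
    _ = t^2 * B - t^2 := b4
  linarith

theorem stmt_6 (p : ℕ) [Fact p.Prime] (hodd : Odd p)
    (A : Finset (ZMod p)) (w : ZMod p → ℝ) (hw : ∀ a ∈ A, w a ∈ Set.Icc (0 : ℝ) 1)
    (γ : ℝ) (hγ : γ ∈ Set.Ioc (0 : ℝ) 1) (hγA : γ * p > ∑ a ∈ A, w a)
    (h : ZMod p → ℝ) (hh : ∀ n, h n ∈ Set.Icc (0 : ℝ) 1)
    (hA : ∀ a ∈ A, h a = w a) (hE : Ex p h = γ)
    (hmin : ∀ h' : ZMod p → ℝ, (∀ n, h' n ∈ Set.Icc (0 : ℝ) 1) →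
      (∀ a ∈ A, h' a = w a) → Ex p h' = γ → Lam p h ≤ Lam p h') :
    ∃ L : ℝ, 0 < L ∧ ∀ n : ZMod p, n ∉ A →
      (Fh p h n < L → h n = 1) ∧ (Fh p h n > L → h n = 0) := by
  have hp : p.Prime := Fact.out
  have h2 : (2 : ZMod p) ≠ 0 := by
    intro hc
    have : (p : ℕ) ∣ 2 := by
      have := (ZMod.natCast_eq_zero_iff 2 p).mp (by exact_mod_cast hc)
      exact this
    have hp2 : p = 2 := (Nat.prime_dvd_prime_iff_eq hp Nat.prime_two).mp this
    rw [hp2] at hodd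
    exact (Nat.not_odd_iff_even.mpr (by norm_num)) hodd
  have key : ∀ n m : ZMod p, n ∉ A → m ∉ A → h n < 1 → 0 < h m →
      Fh p h m ≤ Fh p h n := by
    intro n m hnA hmA hn1 hm0
    by_cases hnm : n = m
    · rw [hnm]
    · exact aux_exchange p h2 A w γ h hh hA hE hmin n m hnA hmA hnm hn1 hm0
  -- positivity of Fh at points of positive mass
  have Fpos : ∀ m : ZMod p, 0 < h m → 0 < Fh p h m := by
    intro m hm
    have hconv1 : (h m) * (h m) ≤ conv p h h (2*m) := by
      have := Finset.single_le_sum (f := fun k => h k * h (2*m - k))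
        (fun k _ => mul_nonneg (hh k).1 (hh _).1) (Finset.mem_univ m)
      have harg : 2*m - m = m := by ring
      unfold conv
      simpa [harg] using this
    have hconv2 : 0 ≤ conv p h (fun m => h (-m * (2 : ZMod p)⁻¹)) (-m) :=
      Finset.sum_nonneg (fun k _ => mul_nonneg (hh k).1 (hh _).1)
    unfold Fh
    nlinarith
  -- existence of a point outside A with positive mass
  have hpR : (0:ℝ) < p := by exact_mod_cast hp.pos
  have hsum : ∑ x : ZMod p, h x = γ * p := by
    have := hE
    unfold Ex at this
    field_simp at this
    linarith [this]
  have hsplit : ∑ x ∈ Finset.univ \ A, h x = γ * p - ∑ a ∈ A, w a := by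
    have h1 : ∑ x ∈ Finset.univ \ A, h x + ∑ x ∈ A, h x = ∑ x : ZMod p, h x :=
      Finset.sum_sdiff (Finset.subset_univ A)
    have h2' : ∑ x ∈ A, h x = ∑ a ∈ A, w a := Finset.sum_congr rfl hA
    rw [h2', hsum] at h1
    linarith
  have hex : ∃ m, m ∉ A ∧ 0 < h m := by
    have hpos : (0:ℝ) < ∑ x ∈ Finset.univ \ A, h x := by rw [hsplit]; linarith
    have := Finset.exists_lt_of_sum_lt (f := fun _ => (0:ℝ)) (g := h)
      (s := Finset.univ \ A) (by simpa using hpos)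
    obtain ⟨m, hm, hm0⟩ := this
    exact ⟨m, (Finset.mem_sdiff.mp hm).2, hm0⟩
  obtain ⟨m₀, hm₀A, hm₀⟩ := hex
  set T : Finset (ZMod p) := Finset.univ.filter (fun x => x ∉ A ∧ h x < 1) with hT
  by_cases hTne : T.Nonempty
  · obtain ⟨n₀, hn₀T, hn₀min⟩ := Finset.exists_min_image T (Fh p h) hTne
    have hn₀ := Finset.mem_filter.mp hn₀T
    refine ⟨Fh p h n₀, ?_, ?_⟩
    · -- positivity of L
      have := key n₀ m₀ hn₀.2.1 hm₀A hn₀.2.2 hm₀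
      have := Fpos m₀ hm₀
      linarith
    · intro n hnA
      constructor
      · intro hlt
        by_contra hne
        have hn1 : h n < 1 := lt_of_le_of_ne (hh n).2 hne
        have hnT : n ∈ T := Finset.mem_filter.mpr ⟨Finset.mem_univ n, hnA, hn1⟩
        exact absurd hlt (not_lt.mpr (hn₀min n hnT))
      · intro hgt
        by_contra hne
        have hn0 : 0 < h n := lt_of_le_of_ne (hh n).1 (Ne.symm hne)
        have := key n₀ n hn₀.2.1 hnA hn₀.2.2 hn0
        exact absurd hgt (not_lt.mpr this)
  · refine ⟨1 + ∑ x : ZMod p, |Fh p h x|, by positivity, ?_⟩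
    intro n hnA
    have hbound : Fh p h n < 1 + ∑ x : ZMod p, |Fh p h x| := by
      have h1 : Fh p h n ≤ |Fh p h n| := le_abs_self _
      have h2' : |Fh p h n| ≤ ∑ x : ZMod p, |Fh p h x| :=
        Finset.single_le_sum (f := fun x => |Fh p h x|)
          (fun x _ => abs_nonneg _) (Finset.mem_univ n)
      linarith
    constructor
    · intro _
      by_contra hne
      have hn1 : h n < 1 := lt_of_le_of_ne (hh n).2 hne
      exact hTne ⟨n, Finset.mem_filter.mpr ⟨Finset.mem_univ n, hnA, hn1⟩⟩
    · intro hgt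
      exact absurd hgt (not_lt.mpr (le_of_lt hbound))
end

section
/- There is an absolute constant C > 0 such that for every prime p and every real α with 2/3 < α ≤ 1, there exists a set S ⊆ 𝔽_p with |S| = ⌊αp⌋ and Λ(S) ≤ α³·(1 − (1−α)²/2) + C/p. -/
noncomputable def ind (p : ℕ) [NeZero p] (S : Finset (ZMod p)) : ZMod p → ℝ :=
  fun n => if n ∈ S then 1 else 0

/-
Take `S = {0, …, m - 1}` with `m = ⌊α p⌋`. A three-term progression in `S` is determined by its
endpoints `a, c ∈ [0, m)` together with the requirement that their midpoint in `𝔽_p` lie in `S`.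
When `a + c` is odd and `2m - p ≤ a + c < p` that midpoint is `(a + c + p) / 2 ∈ [m, p)`, and a
lattice point count shows there are at least `(m² - (2m - p)² - m) / 2` such pairs. Hence
`2 p² Λ(S) ≤ m² + (2m - p)² + m`, i.e. `Λ(S) ≤ (α² + (2α - 1)²) / 2 + 1 / (2p)`, and
`α³ (1 - (1 - α)² / 2) - (α² + (2α - 1)²) / 2 = (1 - α)³ (α² + α - 1) / 2 ≥ 0` for `α > 2/3`.
For `p = 2` the trivial bound `Λ ≤ 1` suffices.
-/

open Finset

section Counting

variable {m p : ℕ}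

/-- The pairs whose midpoint modulo `p` is `(a + c + p) / 2 ∈ [m, p)`. -/
def oddWindow (m p : ℕ) : Finset (ℕ × ℕ) :=
  {x ∈ range m ×ˢ range m | Odd (x.1 + x.2) ∧ 2 * m ≤ x.1 + x.2 + p ∧ x.1 + x.2 < p}

lemma card_evenWindow_le (hp : Odd p) :
    #{x ∈ range m ×ˢ range m | Even (x.1 + x.2) ∧ 2 * m ≤ x.1 + x.2 + p ∧ x.1 + x.2 < p}
      ≤ #(oddWindow m p) + m := by
  set E := {x ∈ range m ×ˢ range m | Even (x.1 + x.2) ∧ 2 * m ≤ x.1 + x.2 + p ∧ x.1 + x.2 < p}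
  have hcover : E ⊆ {x ∈ E | x.2 ≠ 0} ∪ (range m).image fun a => (a, 0) := by
    intro x hx
    by_cases hc : x.2 = 0
    · simp only [E, mem_filter, mem_product, mem_range] at hx
      exact mem_union_right _ (mem_image.2 ⟨x.1, mem_range.2 hx.1.1, by rw [← hc]⟩)
    · exact mem_union_left _ (mem_filter.2 ⟨hx, hc⟩)
  have hshift : #{x ∈ E | x.2 ≠ 0} ≤ #(oddWindow m p) := by
    refine card_le_card_of_injOn (fun x => (x.1, x.2 - 1)) (fun x hx => ?_) fun x hx y hy h => ?_
    · simp only [E, oddWindow, coe_filter, mem_filter, Set.mem_ofPred_eq, mem_product, mem_range,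
        Nat.odd_iff, Nat.even_iff] at hx ⊢
      rcases hp with ⟨k, rfl⟩
      omega
    · simp only [E, coe_filter, mem_filter, Set.mem_ofPred_eq, Prod.mk.injEq] at hx hy h
      ext <;> omega
  calc #E ≤ #{x ∈ E | x.2 ≠ 0} + #((range m).image fun a => (a, 0)) :=
        (card_le_card hcover).trans (card_union_le _ _)
    _ ≤ #(oddWindow m p) + m := add_le_add hshift (card_image_le.trans (card_range m).le)

lemma card_corners_le (hm : m ≤ p) :
    #{x ∈ range m ×ˢ range m | x.1 + x.2 + p < 2 * m} + #{x ∈ range m ×ˢ range m | p ≤ x.1 + x.2}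
      ≤ (2 * m - p) ^ 2 := by
  set low := {x ∈ range m ×ˢ range m | x.1 + x.2 + p < 2 * m}
  set high := {x ∈ range m ×ˢ range m | p ≤ x.1 + x.2}
  set t := p - m
  -- the high corner, translated by `(-t, -t)`, fills the rest of the square `[0, 2m - p)²`
  have hinj : Set.InjOn (fun x : ℕ × ℕ => (x.1 - t, x.2 - t)) high := by
    intro x hx y hy h
    simp only [high, coe_filter, mem_product, mem_range, Set.mem_ofPred_eq, Prod.mk.injEq] at hx hy h
    ext <;> omega
  have hdisj : Disjoint low (high.image fun x => (x.1 - t, x.2 - t)) := by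
    refine disjoint_left.2 fun x hx hx' => ?_
    obtain ⟨y, hy, rfl⟩ := mem_image.1 hx'
    simp only [low, high, mem_filter, mem_product, mem_range] at hx hy
    omega
  calc #low + #high = #(low ∪ high.image fun x => (x.1 - t, x.2 - t)) := by
        rw [card_union_of_disjoint hdisj, card_image_of_injOn hinj]
    _ ≤ #(range (2 * m - p) ×ˢ range (2 * m - p)) := by
        refine card_le_card fun x hx => ?_
        simp only [mem_product, mem_range]
        rcases mem_union.1 hx with hx | hx
        · simp only [low, mem_filter, mem_product, mem_range] at hx
          omega
        · obtain ⟨y, hy, rfl⟩ := mem_image.1 hx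
          simp only [high, mem_filter, mem_product, mem_range] at hy
          omega
    _ = (2 * m - p) ^ 2 := by rw [card_product, card_range, sq]

lemma sq_le_two_mul_card_oddWindow (hp : Odd p) (hm : m ≤ p) :
    m ^ 2 ≤ 2 * #(oddWindow m p) + m + (2 * m - p) ^ 2 := by
  set low := {x ∈ range m ×ˢ range m | x.1 + x.2 + p < 2 * m}
  set high := {x ∈ range m ×ˢ range m | p ≤ x.1 + x.2}
  set evenWindow :=
    {x ∈ range m ×ˢ range m | Even (x.1 + x.2) ∧ 2 * m ≤ x.1 + x.2 + p ∧ x.1 + x.2 < p}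
  have hcover : range m ×ˢ range m ⊆ low ∪ high ∪ evenWindow ∪ oddWindow m p := by
    intro x hx
    simp only [low, high, evenWindow, oddWindow, mem_union, mem_filter, hx, true_and,
      Nat.even_iff, Nat.odd_iff]
    omega
  have hsum := (card_le_card hcover).trans (card_union_le _ _)
  rw [card_product, card_range, ← sq] at hsum
  have hcorners : #low + #high ≤ (2 * m - p) ^ 2 := card_corners_le hm
  have heven : #evenWindow ≤ #(oddWindow m p) + m := card_evenWindow_le hp
  linarith [card_union_le (low ∪ high) evenWindow, card_union_le low high]

end Counting

lemma two_mul_eq_add_of_modEq {p w s : ℕ} (hp : Odd p) (hw : w < p) (hs : Odd s) (hsp : s < p)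
    (h : 2 * w ≡ s [MOD p]) : 2 * w = s + p := by
  unfold Nat.ModEq at h
  rw [Nat.mod_eq_of_lt hsp] at h
  rcases hp with ⟨k, rfl⟩
  rcases hs with ⟨j, rfl⟩
  rcases lt_or_ge (2 * w) (2 * k + 1) with hlt | hge
  · rw [Nat.mod_eq_of_lt hlt] at h
    omega
  · rw [Nat.mod_eq_sub_mod hge, Nat.mod_eq_of_lt (by omega)] at h
    omega

def initSeg (p m : ℕ) [NeZero p] : Finset (ZMod p) := {x | x.val < m}

section ZModInitialSegment

variable {p : ℕ} [NeZero p]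

def threeAPs (S : Finset (ZMod p)) : Finset (ZMod p × ZMod p) :=
  {x | x.1 ∈ S ∧ x.1 + x.2 ∈ S ∧ x.1 + 2 * x.2 ∈ S}

lemma Lam_ind (S : Finset (ZMod p)) : Lam p (ind p S) = #(threeAPs S) / (p : ℝ) ^ 2 := by
  rw [Lam, threeAPs, card_filter, ← univ_product_univ, sum_product, div_eq_inv_mul]
  push_cast
  congr 1
  refine sum_congr rfl fun n _ => sum_congr rfl fun d _ => ?_
  simp only [ind, ite_and]
  split_ifs <;> simp

lemma Lam_ind_le_one (S : Finset (ZMod p)) : Lam p (ind p S) ≤ 1 := by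
  rw [Lam_ind, div_le_one (pow_pos (Nat.cast_pos.2 (NeZero.pos p)) 2)]
  exact_mod_cast (card_le_univ _).trans_eq (by simp [ZMod.card, sq])

lemma card_initSeg {m : ℕ} (hm : m ≤ p) : #(initSeg p m) = m := by
  rw [← card_range m]
  refine card_nbij ZMod.val (fun x hx => by simpa [initSeg] using hx)
    (ZMod.val_injective p).injOn fun a ha => ?_
  simp only [coe_range, Set.mem_Iio] at ha
  exact ⟨a, by simp [initSeg, ZMod.val_cast_of_lt (ha.trans_le hm), ha],
    ZMod.val_cast_of_lt (ha.trans_le hm)⟩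

lemma card_threeAPs_initSeg_add_card_oddWindow_le (hp : Odd p) (m : ℕ) :
    #(threeAPs (initSeg p m)) + #(oddWindow m p) ≤ m ^ 2 := by
  have h2 : IsUnit (2 : ZMod p) := by
    simpa using (ZMod.unitOfCoprime 2 (Nat.coprime_two_left.2 hp)).isUnit
  have hmaps : Set.MapsTo (fun x : ZMod p × ZMod p => (x.1.val, (x.1 + 2 * x.2).val))
      (threeAPs (initSeg p m) : Set (ZMod p × ZMod p))
      ((range m ×ˢ range m) \ oddWindow m p : Finset (ℕ × ℕ)) := by
    rintro ⟨n, d⟩ hx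
    simp only [threeAPs, initSeg, mem_coe, mem_filter, mem_univ, true_and] at hx
    obtain ⟨ha, hw, hc⟩ := hx
    have hmid : 2 * (n + d).val ≡ n.val + (n + 2 * d).val [MOD p] := by
      rw [← ZMod.natCast_eq_natCast_iff]
      push_cast
      simp only [ZMod.natCast_val, ZMod.cast_id', id]
      ring
    simp only [mem_coe, mem_sdiff, mem_product, mem_range, oddWindow, mem_filter,
      not_and, not_lt]
    refine ⟨⟨ha, hc⟩, fun _ hodd hwin => ?_⟩
    by_contra! hlt
    have := two_mul_eq_add_of_modEq hp (ZMod.val_lt _) hodd hlt hmid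
    omega
  calc #(threeAPs (initSeg p m)) + #(oddWindow m p)
      ≤ #((range m ×ˢ range m) \ oddWindow m p) + #(oddWindow m p) := by
        gcongr
        refine card_le_card_of_injOn _ hmaps fun x _ y _ h => ?_
        simp only [Prod.mk.injEq] at h
        have h1 : x.1 = y.1 := ZMod.val_injective p h.1
        have h3 := ZMod.val_injective p h.2
        rw [h1, add_left_cancel_iff] at h3
        exact Prod.ext h1 (h2.mul_left_cancel h3)
    _ = m ^ 2 := by
        rw [card_sdiff_add_card_eq_card (s := oddWindow m p) (filter_subset _ _),
          card_product, card_range, sq]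

lemma Lam_ind_initSeg_le (hp : Odd p) {m : ℕ} (hm : m ≤ p) :
    Lam p (ind p (initSeg p m)) ≤ ((m : ℝ) ^ 2 + ((2 * m - p : ℕ) : ℝ) ^ 2 + m) / (2 * p ^ 2) := by
  have hcount := card_threeAPs_initSeg_add_card_oddWindow_le hp m
  have hwindow := sq_le_two_mul_card_oddWindow hp hm
  have hp0 : (0 : ℝ) < p := Nat.cast_pos.2 (NeZero.pos p)
  rw [Lam_ind, div_le_div_iff₀ (by positivity) (by positivity)]
  have : 2 * #(threeAPs (initSeg p m)) ≤ m ^ 2 + (2 * m - p) ^ 2 + m := by omega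
  have : (2 : ℝ) * #(threeAPs (initSeg p m)) ≤ m ^ 2 + ((2 * m - p : ℕ) : ℝ) ^ 2 + m := by
    exact_mod_cast this
  nlinarith

lemma Lam_ind_initSeg_le_of_le_mul (hp : Odd p) {m : ℕ} {α : ℝ} (hmα : (m : ℝ) ≤ α * p)
    (hm : m ≤ p) (hmp : p ≤ 2 * m) :
    Lam p (ind p (initSeg p m)) ≤ (α ^ 2 + (2 * α - 1) ^ 2) / 2 + 1 / (2 * p) := by
  have hp0 : (0 : ℝ) < p := Nat.cast_pos.2 (NeZero.pos p)
  have hmp' : (m : ℝ) ≤ p := by exact_mod_cast hm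
  have hu : ((2 * m - p : ℕ) : ℝ) ≤ (2 * α - 1) * p := by
    rw [Nat.cast_sub hmp]
    push_cast
    linarith
  calc Lam p (ind p (initSeg p m))
      ≤ ((m : ℝ) ^ 2 + ((2 * m - p : ℕ) : ℝ) ^ 2 + m) / (2 * p ^ 2) := Lam_ind_initSeg_le hp hm
    _ ≤ ((α ^ 2 + (2 * α - 1) ^ 2) * p ^ 2 + p) / (2 * p ^ 2) := by
        gcongr (?_ + ?_) / _
        nlinarith [pow_le_pow_left₀ (Nat.cast_nonneg _) hu 2,
          pow_le_pow_left₀ (Nat.cast_nonneg _) hmα 2]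
    _ = (α ^ 2 + (2 * α - 1) ^ 2) / 2 + 1 / (2 * p) := by
        field_simp

end ZModInitialSegment

lemma sq_add_sq_div_two_le {α : ℝ} (h : 1 ≤ α ^ 2 + α) (h1 : α ≤ 1) :
    (α ^ 2 + (2 * α - 1) ^ 2) / 2 ≤ α ^ 3 * (1 - (1 - α) ^ 2 / 2) := by
  have : α ^ 3 * (1 - (1 - α) ^ 2 / 2) - (α ^ 2 + (2 * α - 1) ^ 2) / 2
      = (1 - α) ^ 3 * (α ^ 2 + α - 1) / 2 := by ring
  nlinarith [mul_nonneg (pow_nonneg (sub_nonneg.2 h1) 3) (sub_nonneg.2 h)]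

theorem stmt_8 :
    ∃ C : ℝ, 0 < C ∧
      ∀ (p : ℕ) [Fact p.Prime],
        ∀ α : ℝ, 2/3 < α → α ≤ 1 →
          ∃ S : Finset (ZMod p), S.card = ⌊α * p⌋₊ ∧
            Lam p (ind p S) ≤ α ^ 3 * (1 - (1 - α) ^ 2 / 2) + C / p := by
  refine ⟨2, two_pos, fun p hp α hα hα1 => ?_⟩
  have htarget := sq_add_sq_div_two_le (α := α) (by nlinarith) hα1
  have hp0 : (0 : ℝ) < p := Nat.cast_pos.2 hp.out.pos
  have hm : ⌊α * p⌋₊ ≤ p := Nat.floor_le_of_le (by nlinarith)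
  rcases hp.out.eq_two_or_odd' with rfl | hodd
  · obtain ⟨S, -, hS⟩ := exists_subset_card_eq (s := (univ : Finset (ZMod 2))) (by simpa using hm)
    refine ⟨S, hS, (Lam_ind_le_one S).trans ?_⟩
    have : (0 : ℝ) ≤ (α ^ 2 + (2 * α - 1) ^ 2) / 2 := by positivity
    norm_num
    linarith
  set m := ⌊α * p⌋₊
  have hmα : (m : ℝ) ≤ α * p := Nat.floor_le (by positivity)
  have hmp : p ≤ 2 * m := by
    have : (2 * p : ℝ) < 3 * m + 3 := by nlinarith [Nat.lt_floor_add_one (α * p)]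
    have : 2 * p < 3 * m + 3 := by exact_mod_cast this
    have := hp.out.two_le
    rcases hodd with ⟨k, rfl⟩
    omega
  refine ⟨initSeg p m, card_initSeg hm, (Lam_ind_initSeg_le_of_le_mul hodd hmα hm hmp).trans ?_⟩
  have : 1 / (2 * (p : ℝ)) ≤ 2 / p := by
    rw [div_le_div_iff₀ (by positivity) hp0]
    linarith
  linarith
end

section
/- There is an absolute constant C > 0 such that the following holds: for every odd prime p, all functions h, h₃ : 𝔽_p → [0,1], and all distinct x, y ∈ 𝔽_p with h₃(n) = h(n) for every n ∉ {x, y}, one has | Λ(h₃) − Λ(h) − p^{−2}·(h₃(x) − h(x))·F_h(x) − p^{−2}·(h₃(y) − h(y))·F_h(y) | ≤ C·p^{−2}. Here F_h(n) := (h∗h)(2n) + 2·(h∗h₂)(−n), where h₂(m) := h(−m/2) (with −m/2 computed in 𝔽_p). -/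
/-!
`p² Λ` is the diagonal of the trilinear form `T = apForm`, `T(a, b, c) = ∑ₙ,d a(n) b(n+d) c(n+2d)`. With
`g = h₃ - h`, expanding `T(h + g, h + g, h + g)` gives `T(h, h, h)`, the three terms linear in `g`,
and terms containing `g` at least twice. Substituting `d ↦ m - n` or `d ↦ (m - n)/2` turns the
linear terms into `∑ₘ g(m) F_h(m)`, which is supported on `{x, y}`. Since any two of `n`, `n+d`,
`n+2d` determine `(n, d)` when `2` is invertible, a term with two factors `g` is at most
`‖g‖₁² ≤ 4` in absolute value.
-/

theorem abs_sum_sum_mul_le {ι : Type*} [Fintype ι] (u v : ι → ℝ) (w : ι → ι → ℝ)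
    (φ : ι → ι → ι) (hφ : ∀ n, Function.Bijective (φ n)) (hw : ∀ n d, |w n d| ≤ 1) :
    |∑ n, ∑ d, u n * v (φ n d) * w n d| ≤ (∑ n, |u n|) * ∑ n, |v n| := by
  calc |∑ n, ∑ d, u n * v (φ n d) * w n d|
      ≤ ∑ n, ∑ d, |u n * v (φ n d) * w n d| :=
        (Finset.abs_sum_le_sum_abs _ _).trans
          (Finset.sum_le_sum fun n _ => Finset.abs_sum_le_sum_abs _ _)
    _ ≤ ∑ n, ∑ d, |u n| * |v (φ n d)| := by
        gcongr with n _ d _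
        rw [abs_mul, abs_mul]
        exact mul_le_of_le_one_right (mul_nonneg (abs_nonneg _) (abs_nonneg _)) (hw n d)
    _ = (∑ n, |u n|) * ∑ n, |v n| := by
        rw [Finset.sum_mul]
        refine Finset.sum_congr rfl fun n _ => ?_
        rw [← Finset.mul_sum, Fintype.sum_bijective (φ n) (hφ n) _ (fun m => |v m|) fun _ => rfl]

section APForm

variable {R : Type*} [CommRing R] [Fintype R]

def apForm (a b c : R → ℝ) : ℝ :=
  ∑ n, ∑ d, a n * b (n + d) * c (n + 2 * d)

theorem apForm_comm (a b c : R → ℝ) : apForm a b c = apForm c b a := by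
  have reflect : Function.Involutive fun q : R × R => (q.1 + 2 * q.2, -q.2) := fun q =>
    Prod.ext (show q.1 + 2 * q.2 + 2 * -q.2 = q.1 by ring) (neg_neg q.2)
  simp only [apForm, ← Fintype.sum_prod_type']
  refine Fintype.sum_bijective _ reflect.bijective _ _ fun q => ?_
  rw [show q.1 + 2 * q.2 + -q.2 = q.1 + q.2 by ring,
    show q.1 + 2 * q.2 + 2 * -q.2 = q.1 by ring]
  ring

theorem apForm_sub_sub_linear (f f' : R → ℝ) :
    apForm f' f' f' - apForm f f f
      - (apForm (f' - f) f f + apForm f (f' - f) f + apForm f f (f' - f))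
      = apForm (f' - f) f (f' - f) + apForm (f' - f) (f' - f) f' + apForm f (f' - f) (f' - f) := by
  simp only [apForm, ← Finset.sum_sub_distrib, ← Finset.sum_add_distrib, Pi.sub_apply]
  exact Finset.sum_congr rfl fun n _ => Finset.sum_congr rfl fun d _ => by ring

theorem abs_apForm_le_of_abs_right_le_one {a b c : R → ℝ} (hc : ∀ m, |c m| ≤ 1) :
    |apForm a b c| ≤ (∑ n, |a n|) * ∑ n, |b n| :=
  abs_sum_sum_mul_le a b (fun n d => c (n + 2 * d)) (fun n d => n + d)
    (fun n => (Equiv.addLeft n).bijective) fun _ _ => hc _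

theorem abs_apForm_le_of_abs_middle_le_one (h2 : IsUnit (2 : R)) {a b c : R → ℝ}
    (hb : ∀ m, |b m| ≤ 1) : |apForm a b c| ≤ (∑ n, |a n|) * ∑ n, |c n| := by
  have hdil : ∀ n : R, Function.Bijective fun d => n + 2 * d := fun n =>
    (Equiv.addLeft n).bijective.comp (IsUnit.isUnit_iff_mulLeft_bijective.mp h2)
  have := abs_sum_sum_mul_le a c (fun n d => b (n + d)) (fun n d => n + 2 * d) hdil
    fun _ _ => hb _
  simpa only [apForm, mul_right_comm _ (c _)] using this

theorem abs_apForm_sub_sub_linear_le (h2 : IsUnit (2 : R)) {f f' : R → ℝ}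
    (hf : ∀ n, |f n| ≤ 1) (hf' : ∀ n, |f' n| ≤ 1) :
    |apForm f' f' f' - apForm f f f
      - (apForm (f' - f) f f + apForm f (f' - f) f + apForm f f (f' - f))|
      ≤ 3 * ((∑ n, |f' n - f n|) * ∑ n, |f' n - f n|) := by
  have e₁ := abs_apForm_le_of_abs_middle_le_one h2 (a := f' - f) (c := f' - f) hf
  have e₂ := abs_apForm_le_of_abs_right_le_one (a := f' - f) (b := f' - f) hf'
  have e₃ := abs_apForm_le_of_abs_right_le_one (a := f' - f) (b := f' - f) hf
  rw [← apForm_comm] at e₃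
  simp only [Pi.sub_apply] at e₁ e₂ e₃
  rw [apForm_sub_sub_linear]
  linarith [abs_add_three (apForm (f' - f) f (f' - f)) (apForm (f' - f) (f' - f) f')
    (apForm f (f' - f) (f' - f))]

end APForm

theorem ZMod.two_ne_zero_of_odd {p : ℕ} [Fact (1 < p)] (hp : Odd p) : (2 : ZMod p) ≠ 0 :=
  Ring.two_ne_zero <| by
    rw [ZMod.ringChar_zmod_n]
    rintro rfl
    exact Nat.not_odd_iff_even.mpr even_two hp

section ZModConv

variable {p : ℕ}

theorem apForm_middle_eq_sum_conv [NeZero p] (f g : ZMod p → ℝ) :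
    apForm f g f = ∑ m, g m * conv p f f (2 * m) := by
  have inner : ∀ n, ∑ d, f n * g (n + d) * f (n + 2 * d) = ∑ m, f n * g m * f (2 * m - n) :=
    fun n => Fintype.sum_equiv (Equiv.addLeft n) _ _ fun d => by
      rw [Equiv.coe_addLeft, show 2 * (n + d) - n = n + 2 * d by ring]
  simp only [apForm, inner, conv, Finset.mul_sum]
  rw [Finset.sum_comm]
  exact Finset.sum_congr rfl fun m _ => Finset.sum_congr rfl fun n _ => by ring

theorem apForm_left_eq_sum_conv [Fact p.Prime] (h2 : (2 : ZMod p) ≠ 0) (f g : ZMod p → ℝ) :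
    apForm g f f = ∑ m, g m * conv p f (fun k => f (-k * (2 : ZMod p)⁻¹)) (-m) := by
  have hdil : ∀ n : ZMod p, Function.Bijective fun d => n + 2 * d := fun n =>
    (Equiv.addLeft n).bijective.comp (mulLeft_bijective₀ 2 h2)
  refine Finset.sum_congr rfl fun n _ => ?_
  simp only [conv, Finset.mul_sum]
  refine Fintype.sum_bijective _ (hdil n) _ _ fun d => ?_
  rw [show -(-n - (n + 2 * d)) * (2 : ZMod p)⁻¹ = n + d by field_simp; ring]
  ring

theorem apForm_linear_eq_sum_mul_Fh [Fact p.Prime] (h2 : (2 : ZMod p) ≠ 0)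
    (f g : ZMod p → ℝ) :
    apForm g f f + apForm f g f + apForm f f g = ∑ m, g m * Fh p f m := by
  rw [apForm_comm f f g, apForm_middle_eq_sum_conv, apForm_left_eq_sum_conv h2,
    ← Finset.sum_add_distrib, ← Finset.sum_add_distrib]
  exact Finset.sum_congr rfl fun m _ => by rw [Fh]; ring

end ZModConv

theorem stmt_11 :
    ∃ C : ℝ, 0 < C ∧
      ∀ (p : ℕ) [Fact p.Prime], Odd p →
        ∀ h h₃ : ZMod p → ℝ,
          (∀ n, h n ∈ Set.Icc (0 : ℝ) 1) → (∀ n, h₃ n ∈ Set.Icc (0 : ℝ) 1) →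
          ∀ x y : ZMod p, x ≠ y →
            (∀ n, n ≠ x → n ≠ y → h₃ n = h n) →
            |Lam p h₃ - Lam p h - ((p : ℝ) ^ 2)⁻¹ * (h₃ x - h x) * Fh p h x
                - ((p : ℝ) ^ 2)⁻¹ * (h₃ y - h y) * Fh p h y| ≤ C * ((p : ℝ) ^ 2)⁻¹ := by
  refine ⟨12, by norm_num, fun p _ hp h h₃ hh hh₃ x y hxy hagree => ?_⟩
  have h2 := ZMod.two_ne_zero_of_odd hp
  have hsupp : ∀ n, n ≠ x ∧ n ≠ y → h₃ n - h n = 0 := fun n hn => by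
    rw [hagree n hn.1 hn.2, sub_self]
  have hl1 : ∑ n, |h₃ n - h n| ≤ 2 := by
    rw [Fintype.sum_eq_add x y hxy fun n hn => by rw [hsupp n hn, abs_zero]]
    linarith [abs_sub_le_of_nonneg_of_le (hh₃ x).1 (hh₃ x).2 (hh x).1 (hh x).2,
      abs_sub_le_of_nonneg_of_le (hh₃ y).1 (hh₃ y).2 (hh y).1 (hh y).2]
  have hlin : apForm (h₃ - h) h h + apForm h (h₃ - h) h + apForm h h (h₃ - h)
      = (h₃ x - h x) * Fh p h x + (h₃ y - h y) * Fh p h y := by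
    rw [apForm_linear_eq_sum_mul_Fh h2,
      Fintype.sum_eq_add x y hxy fun n hn => by rw [Pi.sub_apply, hsupp n hn, zero_mul]]
    rfl
  have hbound := abs_apForm_sub_sub_linear_le h2.isUnit
    (fun n => (abs_of_nonneg (hh n).1).trans_le (hh n).2)
    (fun n => (abs_of_nonneg (hh₃ n).1).trans_le (hh₃ n).2)
  rw [hlin] at hbound
  have hdiff : Lam p h₃ - Lam p h - ((p : ℝ) ^ 2)⁻¹ * (h₃ x - h x) * Fh p h x
      - ((p : ℝ) ^ 2)⁻¹ * (h₃ y - h y) * Fh p h y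
      = ((p : ℝ) ^ 2)⁻¹ * (apForm h₃ h₃ h₃ - apForm h h h
          - ((h₃ x - h x) * Fh p h x + (h₃ y - h y) * Fh p h y)) := by
    rw [Lam, Lam, apForm, apForm]
    ring
  rw [hdiff, abs_mul, abs_of_nonneg (by positivity), mul_comm]
  refine mul_le_mul_of_nonneg_right (hbound.trans ?_) (by positivity)
  have := mul_le_mul hl1 hl1 (Finset.sum_nonneg fun n _ => abs_nonneg _) zero_le_two
  linarith
end

section
/- Let p be an odd prime, let A ⊆ 𝔽_p, and associate to each a ∈ A a real number w_a ∈ [0,1]. Let γ ∈ (0,1] satisfy γ·p > Σ_{a ∈ A} w_a. Suppose h : 𝔽_p → [0,1] satisfies h(a) = w_a for all a ∈ A, 𝔼(h) = γ, and Λ(h) ≤ Λ(h') for every h' : 𝔽_p → [0,1] with h'(a) = w_a for all a ∈ A and 𝔼(h') = γ. If x, y ∈ 𝔽_p \ A satisfy F_h(x) < F_h(y) and h(y) > 0, then h(x) = 1. Here F_h(n) := (h∗h)(2n) + 2·(h∗h₂)(−n), where h₂(m) := h(−m/2) (with −m/2 computed in 𝔽_p). -/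
lemma aux_T1 (p : ℕ) [NeZero p] (h2 : (2 : ZMod p) ≠ 0)
    (h21 : (2 : ZMod p) * 2⁻¹ = 1) (h : ZMod p → ℝ) (z : ZMod p) :
    (∑ n : ZMod p, ∑ d : ZMod p, (if n = z then (1:ℝ) else 0) * h (n + d) * h (n + 2 * d))
      = conv p h (fun m => h (-m * (2 : ZMod p)⁻¹)) (-z) := by
  have key : ∀ a : ZMod p, 2 * a * 2⁻¹ = a := fun a => by
    rw [mul_assoc, mul_left_comm, h21, mul_one]
  rw [Finset.sum_eq_single z ?_ ?_]
  · rw [if_pos rfl]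
    simp only [one_mul]
    rw [conv]
    refine Fintype.sum_equiv ⟨fun d => z + 2*d, fun k => (k - z)*2⁻¹, fun d => ?_, fun k => ?_⟩ _ _ fun d => ?_
    · show (z + 2*d - z) * 2⁻¹ = d
      rw [add_sub_cancel_left, key]
    · show z + 2 * ((k - z) * 2⁻¹) = k
      rw [← mul_assoc, key]; ring
    · simp only [Equiv.coe_fn_mk]
      have e1 : -(-z - (z + 2*d)) * (2:ZMod p)⁻¹ = z + d := by
        rw [show -(-z - (z + 2*d)) = 2*(z+d) by ring, key]
      rw [e1, mul_comm]
  · intro b _ hb; simp [hb]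
  · simp

lemma aux_T2 (p : ℕ) [NeZero p] (h : ZMod p → ℝ) (z : ZMod p) :
    (∑ n : ZMod p, ∑ d : ZMod p, h n * (if n + d = z then (1:ℝ) else 0) * h (n + 2 * d))
      = conv p h h (2 * z) := by
  rw [conv]
  refine Finset.sum_congr rfl fun n _ => ?_
  rw [Finset.sum_eq_single (z - n) ?_ ?_]
  · rw [if_pos (by ring), mul_one]
    congr 1
    ring
  · intro b _ hb
    rw [if_neg (fun e => hb (by rw [← e]; ring)), mul_zero, zero_mul]
  · simp

lemma aux_T3 (p : ℕ) [NeZero p] (h2 : (2 : ZMod p) ≠ 0)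
    (h21 : (2 : ZMod p) * 2⁻¹ = 1) (h : ZMod p → ℝ) (z : ZMod p) :
    (∑ n : ZMod p, ∑ d : ZMod p, h n * h (n + d) * (if n + 2 * d = z then (1:ℝ) else 0))
      = conv p h (fun m => h (-m * (2 : ZMod p)⁻¹)) (-z) := by
  have key : ∀ a : ZMod p, 2 * a * 2⁻¹ = a := fun a => by
    rw [mul_assoc, mul_left_comm, h21, mul_one]
  rw [conv]
  refine Finset.sum_congr rfl fun n _ => ?_
  rw [Finset.sum_eq_single ((z - n) * 2⁻¹) ?_ ?_]
  · have e0 : n + 2 * ((z - n) * 2⁻¹) = z := by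
      rw [← mul_assoc, key]; ring
    rw [if_pos e0, mul_one]
    congr 1
    rw [show -(-z - n) = 2*n*2⁻¹*2 + (z - n) by rw [key]; ring]
    rw [add_mul, mul_assoc _ 2 2⁻¹, h21, mul_one, key]
  · intro b _ hb
    have : n + 2 * b ≠ z := fun e => hb (by rw [← e, show n + 2*b - n = 2*b by ring, key])
    rw [if_neg this, mul_zero]
  · simp

theorem stmt_13 (p : ℕ) [Fact p.Prime] (hodd : Odd p)
    (A : Finset (ZMod p)) (w : ZMod p → ℝ) (hw : ∀ a ∈ A, w a ∈ Set.Icc (0 : ℝ) 1)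
    (γ : ℝ) (hγ : γ ∈ Set.Ioc (0 : ℝ) 1) (hγA : γ * p > ∑ a ∈ A, w a)
    (h : ZMod p → ℝ) (hh : ∀ n, h n ∈ Set.Icc (0 : ℝ) 1)
    (hA : ∀ a ∈ A, h a = w a) (hE : Ex p h = γ)
    (hmin : ∀ h' : ZMod p → ℝ, (∀ n, h' n ∈ Set.Icc (0 : ℝ) 1) →
      (∀ a ∈ A, h' a = w a) → Ex p h' = γ → Lam p h ≤ Lam p h')
    (x y : ZMod p) (hx : x ∉ A) (hy : y ∉ A)
    (hF : Fh p h x < Fh p h y) (hhy : h y > 0) :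
    h x = 1 := by
  by_contra hx1
  have hp : p.Prime := Fact.out
  have hppos : (0:ℝ) < p := by exact_mod_cast hp.pos
  have hp2 : p ≠ 2 := by rintro rfl; exact absurd hodd (by decide)
  have h2 : (2 : ZMod p) ≠ 0 := by
    intro h0
    have h2' : ((2 : ℕ) : ZMod p) = 0 := by exact_mod_cast h0
    have := (ZMod.natCast_eq_zero_iff 2 p).mp h2'
    exact hp2 ((Nat.prime_dvd_prime_iff_eq hp Nat.prime_two).mp this)
  have h21 : (2 : ZMod p) * 2⁻¹ = 1 := mul_inv_cancel₀ h2
  have hxy : x ≠ y := fun e => absurd hF (by rw [e]; exact lt_irrefl _)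
  have hhx1 : h x < 1 := lt_of_le_of_ne (hh x).2 hx1
  -- the perturbation
  set u : ZMod p → ℝ := fun n => (if n = x then (1:ℝ) else 0) - (if n = y then 1 else 0) with hu
  set t : ℝ := min (min (1 - h x) (h y)) ((Fh p h y - Fh p h x) / (8 * (p:ℝ)^2)) with htdef
  have ht0 : 0 < t := by
    apply lt_min (lt_min (by linarith) hhy)
    apply div_pos (by linarith) (by positivity)
  have ht1 : t ≤ 1 - h x := le_trans (min_le_left _ _) (min_le_left _ _)
  have ht2 : t ≤ h y := le_trans (min_le_left _ _) (min_le_right _ _)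
  have ht3 : t ≤ (Fh p h y - Fh p h x) / (8 * (p:ℝ)^2) := min_le_right _ _
  have htle1 : t ≤ 1 := le_trans ht1 (by linarith [(hh x).1])
  set h' : ZMod p → ℝ := fun n => h n + t * u n with hh'def
  -- feasibility
  have hux : u x = 1 := by simp [hu, hxy]
  have huy : u y = -1 := by simp [hu, Ne.symm hxy]
  have hrange : ∀ n, h' n ∈ Set.Icc (0:ℝ) 1 := by
    intro n
    by_cases hnx : n = x
    · subst hnx
      simp only [hh'def, hux, mul_one]
      constructor
      · linarith [(hh n).1]
      · linarith
    · by_cases hny : n = y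
      · subst hny
        simp only [hh'def, huy, mul_neg_one]
        constructor
        · linarith
        · linarith [(hh n).2]
      · have : u n = 0 := by simp [hu, hnx, hny]
        simp only [hh'def, this, mul_zero, add_zero]
        exact hh n
  have hA' : ∀ a ∈ A, h' a = w a := by
    intro a ha
    have hax : a ≠ x := fun e => hx (e ▸ ha)
    have hay : a ≠ y := fun e => hy (e ▸ ha)
    have : u a = 0 := by simp [hu, hax, hay]
    simp only [hh'def, this, mul_zero, add_zero]
    exact hA a ha
  have hsumu : ∑ n : ZMod p, u n = 0 := by
    simp [hu, Finset.sum_sub_distrib, Finset.sum_ite_eq']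
  have hE' : Ex p h' = γ := by
    rw [← hE, Ex, Ex]
    congr 1
    simp only [hh'def]
    rw [Finset.sum_add_distrib, ← Finset.mul_sum, hsumu, mul_zero, add_zero]
  -- expansion of Lam
  set S0 : ℝ := ∑ n : ZMod p, ∑ d : ZMod p, h n * h (n + d) * h (n + 2 * d) with hS0
  set SD : ℝ := ∑ n : ZMod p, ∑ d : ZMod p,
      (u n * h (n + d) * h (n + 2 * d) + h n * u (n + d) * h (n + 2 * d)
        + h n * h (n + d) * u (n + 2 * d)) with hSD
  set SQ : ℝ := ∑ n : ZMod p, ∑ d : ZMod p,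
      (u n * u (n + d) * h (n + 2 * d) + u n * h (n + d) * u (n + 2 * d)
        + h n * u (n + d) * u (n + 2 * d)) with hSQ
  set SC : ℝ := ∑ n : ZMod p, ∑ d : ZMod p, u n * u (n + d) * u (n + 2 * d) with hSC
  have expand : (∑ n : ZMod p, ∑ d : ZMod p, h' n * h' (n + d) * h' (n + 2 * d))
      = S0 + t * SD + t^2 * SQ + t^3 * SC := by
    rw [hS0, hSD, hSQ, hSC]
    simp only [hh'def, Finset.mul_sum, ← Finset.sum_add_distrib]
    exact Finset.sum_congr rfl fun n _ => Finset.sum_congr rfl fun d _ => by ring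
  -- identify SD
  have hSDval : SD = Fh p h x - Fh p h y := by
    rw [hSD]
    have split : ∀ n d : ZMod p,
        (u n * h (n + d) * h (n + 2 * d) + h n * u (n + d) * h (n + 2 * d)
          + h n * h (n + d) * u (n + 2 * d))
        = ((if n = x then (1:ℝ) else 0) * h (n + d) * h (n + 2 * d)
            + h n * (if n + d = x then (1:ℝ) else 0) * h (n + 2 * d)
            + h n * h (n + d) * (if n + 2*d = x then (1:ℝ) else 0))
          - ((if n = y then (1:ℝ) else 0) * h (n + d) * h (n + 2 * d)
            + h n * (if n + d = y then (1:ℝ) else 0) * h (n + 2 * d)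
            + h n * h (n + d) * (if n + 2*d = y then (1:ℝ) else 0)) := by
      intro n d
      simp only [hu]
      ring
    calc (∑ n : ZMod p, ∑ d : ZMod p,
        (u n * h (n + d) * h (n + 2 * d) + h n * u (n + d) * h (n + 2 * d)
          + h n * h (n + d) * u (n + 2 * d)))
        = (∑ n : ZMod p, ∑ d : ZMod p,
            ((if n = x then (1:ℝ) else 0) * h (n + d) * h (n + 2 * d)
            + h n * (if n + d = x then (1:ℝ) else 0) * h (n + 2 * d)
            + h n * h (n + d) * (if n + 2*d = x then (1:ℝ) else 0)))
          - (∑ n : ZMod p, ∑ d : ZMod p,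
            ((if n = y then (1:ℝ) else 0) * h (n + d) * h (n + 2 * d)
            + h n * (if n + d = y then (1:ℝ) else 0) * h (n + 2 * d)
            + h n * h (n + d) * (if n + 2*d = y then (1:ℝ) else 0))) := by
          simp only [split, Finset.sum_sub_distrib]
      _ = Fh p h x - Fh p h y := by
          simp only [Finset.sum_add_distrib]
          rw [aux_T1 p h2 h21 h x, aux_T2 p h x, aux_T3 p h2 h21 h x,
              aux_T1 p h2 h21 h y, aux_T2 p h y, aux_T3 p h2 h21 h y]
          rw [Fh, Fh]
          ring
  -- bounds
  have hub : ∀ n, |u n| ≤ 1 := by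
    intro n
    simp only [hu]
    split_ifs <;> norm_num
  have hhb : ∀ n, |h n| ≤ 1 := fun n => abs_le.mpr ⟨by linarith [(hh n).1], (hh n).2⟩
  have habc : ∀ a b c : ℝ, |a| ≤ 1 → |b| ≤ 1 → |c| ≤ 1 → |a * b * c| ≤ 1 := by
    intro a b c ha hb hc
    rw [abs_mul, abs_mul]
    calc |a| * |b| * |c| ≤ 1 * 1 * 1 := by gcongr <;> positivity
      _ = 1 := by norm_num
  have hcard : (Finset.univ : Finset (ZMod p)).card = p := by
    rw [Finset.card_univ, ZMod.card]
  have hSQb : |SQ| ≤ 3 * (p:ℝ)^2 := by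
    calc |SQ| ≤ ∑ n : ZMod p, |∑ d : ZMod p,
        (u n * u (n + d) * h (n + 2 * d) + u n * h (n + d) * u (n + 2 * d)
          + h n * u (n + d) * u (n + 2 * d))| := Finset.abs_sum_le_sum_abs _ _
      _ ≤ ∑ n : ZMod p, ∑ d : ZMod p,
          |u n * u (n + d) * h (n + 2 * d) + u n * h (n + d) * u (n + 2 * d)
            + h n * u (n + d) * u (n + 2 * d)| :=
        Finset.sum_le_sum fun n _ => Finset.abs_sum_le_sum_abs _ _
      _ ≤ ∑ _n : ZMod p, ∑ _d : ZMod p, (3:ℝ) := by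
        refine Finset.sum_le_sum fun n _ => Finset.sum_le_sum fun d _ => ?_
        calc |u n * u (n + d) * h (n + 2 * d) + u n * h (n + d) * u (n + 2 * d)
            + h n * u (n + d) * u (n + 2 * d)|
            ≤ |u n * u (n + d) * h (n + 2 * d)| + |u n * h (n + d) * u (n + 2 * d)|
              + |h n * u (n + d) * u (n + 2 * d)| := abs_add_three _ _ _
          _ ≤ 1 + 1 + 1 := by
              gcongr <;> [exact habc _ _ _ (hub _) (hub _) (hhb _);
                exact habc _ _ _ (hub _) (hhb _) (hub _);
                exact habc _ _ _ (hhb _) (hub _) (hub _)]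
          _ = 3 := by norm_num
      _ = 3 * (p:ℝ)^2 := by
        rw [Finset.sum_const, Finset.sum_const, hcard]
        simp [nsmul_eq_mul]
        ring
  have hSCb : |SC| ≤ (p:ℝ)^2 := by
    calc |SC| ≤ ∑ n : ZMod p, |∑ d : ZMod p, u n * u (n + d) * u (n + 2 * d)| :=
        Finset.abs_sum_le_sum_abs _ _
      _ ≤ ∑ n : ZMod p, ∑ d : ZMod p, |u n * u (n + d) * u (n + 2 * d)| :=
        Finset.sum_le_sum fun n _ => Finset.abs_sum_le_sum_abs _ _
      _ ≤ ∑ _n : ZMod p, ∑ _d : ZMod p, (1:ℝ) :=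
        Finset.sum_le_sum fun n _ => Finset.sum_le_sum fun d _ =>
          habc _ _ _ (hub _) (hub _) (hub _)
      _ = (p:ℝ)^2 := by
        rw [Finset.sum_const, Finset.sum_const, hcard]
        simp [nsmul_eq_mul]
        ring
  -- conclude
  have hLh : Lam p h = ((p:ℝ)^2)⁻¹ * S0 := by rw [Lam, hS0]
  have hLh' : Lam p h' = ((p:ℝ)^2)⁻¹ * (S0 + t * SD + t^2 * SQ + t^3 * SC) := by
    rw [Lam, expand]
  have hDneg : SD < 0 := by rw [hSDval]; linarith
  have hkey : t * SD + t^2 * SQ + t^3 * SC < 0 := by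
    have e1 : t^2 * SQ ≤ t^2 * (3 * (p:ℝ)^2) :=
      mul_le_mul_of_nonneg_left (le_of_abs_le hSQb) (sq_nonneg t)
    have e2 : t^3 * SC ≤ t^3 * (p:ℝ)^2 := by
      apply mul_le_mul_of_nonneg_left (le_of_abs_le hSCb)
      positivity
    have e3 : t^3 ≤ t^2 := by nlinarith
    have e2b : t^3 * SC ≤ t^2 * (p:ℝ)^2 :=
      le_trans e2 (mul_le_mul_of_nonneg_right e3 (by positivity))
    have A1 : t^2 * SQ + t^3 * SC ≤ t^2 * (4 * (p:ℝ)^2) := by linarith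
    have e4 : t * (8 * (p:ℝ)^2) ≤ Fh p h y - Fh p h x :=
      (le_div_iff₀ (by positivity : (0:ℝ) < 8 * (p:ℝ)^2)).mp ht3
    have e4b : t * (t * (8 * (p:ℝ)^2)) ≤ t * (Fh p h y - Fh p h x) :=
      mul_le_mul_of_nonneg_left e4 (le_of_lt ht0)
    have e5 : t^2 * (4 * (p:ℝ)^2) ≤ t * (Fh p h y - Fh p h x) / 2 := by linarith
    have hts : t * SD = - (t * (Fh p h y - Fh p h x)) := by rw [hSDval]; ring
    have htneg : 0 < t * (Fh p h y - Fh p h x) := mul_pos ht0 (by linarith)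
    linarith
  have hlt : Lam p h' < Lam p h := by
    rw [hLh, hLh']
    have hinv : (0:ℝ) < ((p:ℝ)^2)⁻¹ := by positivity
    have h9 : S0 + t * SD + t^2 * SQ + t^3 * SC < S0 := by linarith
    exact mul_lt_mul_of_pos_left h9 hinv
  exact absurd (hmin h' hrange hA' hE') (not_le.mpr hlt)
end
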